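/- Let g be a Lie algebra and N : g → g with vanishing Nijenhuis torsion. Then for every k ≥ 0 the iterate N^k also has vanishing Nijenhuis torsion, and the brackets [·,·]_{N^k} are pairwise compatible: for all scalars a, b and all k, l, the bilinear bracket a[·,·]_{N^k} + b[·,·]_{N^l} satisfies the Jacobi identity. -/
import Mathlib


/-- The deformed bracket `[x,y]_M = [Mx,y] + [x,My] - M[x,y]`. -/
def deformedBracket {k g : Type*} [CommRing k] [LieRing g] [LieAlgebra k g]
    (M : g →ₗ[k] g) (x y : g) : g :=
  ⁅M x, y⁆ + ⁅x, M y⁆ - M ⁅x, y⁆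

section Aux

variable {k g : Type*} [CommRing k] [LieRing g] [LieAlgebra k g]

/-- The Jacobi identity in left-nested form. -/
private lemma jacL (u v w : g) : ⁅⁅u,v⁆,w⁆ + ⁅⁅v,w⁆,u⁆ + ⁅⁅w,u⁆,v⁆ = 0 := by
  have h := lie_jacobi u v w
  rw [← lie_skew u ⁅v,w⁆, ← lie_skew v ⁅w,u⁆, ← lie_skew w ⁅u,v⁆] at h
  rw [show (-⁅⁅v,w⁆,u⁆ + -⁅⁅w,u⁆,v⁆ + -⁅⁅u,v⁆,w⁆)
        = -(⁅⁅u,v⁆,w⁆ + ⁅⁅v,w⁆,u⁆ + ⁅⁅w,u⁆,v⁆) from by abel] at h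
  exact neg_eq_zero.mp h

/-- Expansion of the iterated deformed bracket of a torsion-free map. -/
private lemma bb_expand (M : g →ₗ[k] g)
    (ht : ∀ x y : g, ⁅M x, M y⁆ = M (deformedBracket M x y)) (x y z : g) :
    deformedBracket M (deformedBracket M x y) z =
      ⁅⁅M x, M y⁆, z⁆ + ⁅⁅M x, y⁆, M z⁆ + ⁅⁅x, M y⁆, M z⁆
      - M ⁅⁅M x, y⁆, z⁆ - M ⁅⁅x, M y⁆, z⁆ - M ⁅⁅x, y⁆, M z⁆
      + M (M ⁅⁅x, y⁆, z⁆) := by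
  have h1 := ht x y
  have h2 := ht ⁅x, y⁆ z
  simp only [deformedBracket] at h1 h2 ⊢
  rw [← h1]
  simp only [map_add, map_sub, add_lie, sub_lie, lie_add, lie_sub] at h2 ⊢
  rw [h2]
  abel

/-- A linear map with vanishing Nijenhuis torsion deforms the bracket to a bracket
satisfying the Jacobi identity. -/
private lemma torsionfree_jacobi (M : g →ₗ[k] g)
    (ht : ∀ x y : g, ⁅M x, M y⁆ = M (deformedBracket M x y)) (x y z : g) :
    deformedBracket M (deformedBracket M x y) z
      + deformedBracket M (deformedBracket M y z) x
      + deformedBracket M (deformedBracket M z x) y = 0 := by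
  rw [bb_expand M ht x y z, bb_expand M ht y z x, bb_expand M ht z x y]
  have j1 := jacL (M x) (M y) z
  have j2 := jacL (M y) (M z) x
  have j3 := jacL (M z) (M x) y
  have m4 : M ⁅⁅M x, y⁆, z⁆ + M ⁅⁅y, z⁆, M x⁆ + M ⁅⁅z, M x⁆, y⁆ = 0 := by
    rw [← map_add, ← map_add, jacL (M x) y z, map_zero]
  have m5 : M ⁅⁅x, M y⁆, z⁆ + M ⁅⁅M y, z⁆, x⁆ + M ⁅⁅z, x⁆, M y⁆ = 0 := by
    rw [← map_add, ← map_add]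
    rw [show ⁅⁅x, M y⁆, z⁆ + ⁅⁅M y, z⁆, x⁆ + ⁅⁅z, x⁆, M y⁆
        = ⁅⁅M y, z⁆, x⁆ + ⁅⁅z, x⁆, M y⁆ + ⁅⁅x, M y⁆, z⁆ from by abel, jacL (M y) z x, map_zero]
  have m6 : M ⁅⁅x, y⁆, M z⁆ + M ⁅⁅y, M z⁆, x⁆ + M ⁅⁅M z, x⁆, y⁆ = 0 := by
    rw [← map_add, ← map_add]
    rw [show ⁅⁅x, y⁆, M z⁆ + ⁅⁅y, M z⁆, x⁆ + ⁅⁅M z, x⁆, y⁆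
        = ⁅⁅M z, x⁆, y⁆ + ⁅⁅x, y⁆, M z⁆ + ⁅⁅y, M z⁆, x⁆ from by abel, jacL (M z) x y, map_zero]
  have m7 : M (M ⁅⁅x, y⁆, z⁆) + M (M ⁅⁅y, z⁆, x⁆) + M (M ⁅⁅z, x⁆, y⁆) = 0 := by
    rw [← map_add, ← map_add, ← map_add, ← map_add, jacL x y z, map_zero, map_zero]
  have key : (⁅⁅M x, M y⁆, z⁆ + ⁅⁅M y, z⁆, M x⁆ + ⁅⁅z, M x⁆, M y⁆)
      + (⁅⁅M y, M z⁆, x⁆ + ⁅⁅M z, x⁆, M y⁆ + ⁅⁅x, M y⁆, M z⁆)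
      + (⁅⁅M z, M x⁆, y⁆ + ⁅⁅M x, y⁆, M z⁆ + ⁅⁅y, M z⁆, M x⁆)
      - (M ⁅⁅M x, y⁆, z⁆ + M ⁅⁅y, z⁆, M x⁆ + M ⁅⁅z, M x⁆, y⁆)
      - (M ⁅⁅x, M y⁆, z⁆ + M ⁅⁅M y, z⁆, x⁆ + M ⁅⁅z, x⁆, M y⁆)
      - (M ⁅⁅x, y⁆, M z⁆ + M ⁅⁅y, M z⁆, x⁆ + M ⁅⁅M z, x⁆, y⁆)
      + (M (M ⁅⁅x, y⁆, z⁆) + M (M ⁅⁅y, z⁆, x⁆) + M (M ⁅⁅z, x⁆, y⁆)) = 0 := by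
    rw [j1, j2, j3, m4, m5, m6, m7]; abel
  rw [← key]; abel

/-- The fundamental mixed identity for the iterates of a Nijenhuis operator, with `N` and a
power of `N`. -/
private lemma hC1 (N : g →ₗ[k] g)
    (ht : ∀ x y : g, ⁅N x, N y⁆ = N (deformedBracket N x y)) :
    ∀ (q : ℕ) (x y : g), ⁅N x, (N ^ q) y⁆
      = (N ^ q) ⁅N x, y⁆ + N ⁅x, (N ^ q) y⁆ - N ((N ^ q) ⁅x, y⁆) := by
  intro q
  induction q with
  | zero => intro x y; simp
  | succ q ih =>
    intro x y
    have h := ht x ((N ^ q) y)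
    simp only [deformedBracket, map_add, map_sub] at h
    have e2 : ∀ u : g, (N ^ (q + 1)) u = N ((N ^ q) u) := by
      intro u; rw [pow_succ']; rfl
    rw [e2 y, h, ih x y, e2 ⁅N x, y⁆, e2 ⁅x, y⁆]
    simp only [map_add, map_sub]
    abel

/-- The fundamental mixed identity for the iterates of a Nijenhuis operator. -/
private lemma hC (N : g →ₗ[k] g)
    (ht : ∀ x y : g, ⁅N x, N y⁆ = N (deformedBracket N x y)) :
    ∀ (p q : ℕ) (x y : g), ⁅(N ^ p) x, (N ^ q) y⁆
      = (N ^ q) ⁅(N ^ p) x, y⁆ + (N ^ p) ⁅x, (N ^ q) y⁆ - (N ^ p) ((N ^ q) ⁅x, y⁆) := by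
  intro p
  induction p with
  | zero => intro q x y; simp
  | succ p ih =>
    intro q x y
    have e2 : ∀ u : g, (N ^ (p + 1)) u = N ((N ^ p) u) := by
      intro u; rw [pow_succ']; rfl
    rw [e2 x, hC1 N ht q (((N ^ p)) x) y, ih q x y, ← e2 x]
    simp only [map_add, map_sub]
    rw [e2 ⁅x, (N ^ q) y⁆, e2 ((N ^ q) ⁅x, y⁆)]
    abel

/-- Any pencil `a • N^m + b • N^l` of iterates of a Nijenhuis operator has vanishing
Nijenhuis torsion. -/
private lemma mixed_torsion (N : g →ₗ[k] g)
    (ht : ∀ x y : g, ⁅N x, N y⁆ = N (deformedBracket N x y))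
    (a b : k) (m l : ℕ) (x y : g) :
    ⁅(a • N ^ m + b • N ^ l) x, (a • N ^ m + b • N ^ l) y⁆
      = (a • N ^ m + b • N ^ l) (deformedBracket (a • N ^ m + b • N ^ l) x y) := by
  simp only [deformedBracket, LinearMap.add_apply, LinearMap.smul_apply,
    lie_add, add_lie, lie_smul, smul_lie, map_add, map_sub, map_smul, smul_add, smul_sub,
    smul_smul]
  rw [hC N ht m m x y, hC N ht m l x y, hC N ht l m x y, hC N ht l l x y]
  simp only [map_add, map_sub, smul_add, smul_sub, smul_smul]
  module

/-- The deformed bracket is linear in the deforming map. -/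
private lemma lin_db (N : g →ₗ[k] g) (a b : k) (m l : ℕ) (x y : g) :
    a • deformedBracket (N ^ m) x y + b • deformedBracket (N ^ l) x y
      = deformedBracket (a • N ^ m + b • N ^ l) x y := by
  simp only [deformedBracket, LinearMap.add_apply, LinearMap.smul_apply,
    lie_smul, smul_lie, lie_add, add_lie, map_smul, smul_add, smul_sub]
  module

end Aux

/-- If `N` has vanishing Nijenhuis torsion, then every iterate `N^m` also
has vanishing Nijenhuis torsion, and the brackets `[·,·]_{N^m}` are pairwise compatible:
any linear combination `a[·,·]_{N^m} + b[·,·]_{N^l}` satisfies the Jacobi identity. -/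
theorem nijenhuis_iterates_compatible
    {k g : Type*} [Field k] [CharZero k] [LieRing g] [LieAlgebra k g]
    (N : g →ₗ[k] g)
    (htorsion : ∀ x y : g, ⁅N x, N y⁆ = N (deformedBracket N x y)) :
    (∀ m : ℕ, ∀ x y : g,
        ⁅(N ^ m) x, (N ^ m) y⁆ = (N ^ m) (deformedBracket (N ^ m) x y)) ∧
    (∀ (a b : k) (m l : ℕ), ∀ x y z : g,
        (a • deformedBracket (N ^ m)
              (a • deformedBracket (N ^ m) x y + b • deformedBracket (N ^ l) x y) z
          + b • deformedBracket (N ^ l)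
              (a • deformedBracket (N ^ m) x y + b • deformedBracket (N ^ l) x y) z)
        + (a • deformedBracket (N ^ m)
              (a • deformedBracket (N ^ m) y z + b • deformedBracket (N ^ l) y z) x
          + b • deformedBracket (N ^ l)
              (a • deformedBracket (N ^ m) y z + b • deformedBracket (N ^ l) y z) x)
        + (a • deformedBracket (N ^ m)
              (a • deformedBracket (N ^ m) z x + b • deformedBracket (N ^ l) z x) y
          + b • deformedBracket (N ^ l)
              (a • deformedBracket (N ^ m) z x + b • deformedBracket (N ^ l) z x) y)
        = 0) := by
  constructor
  · intro m x y
    rw [hC N htorsion m m x y]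
    simp only [deformedBracket, map_add, map_sub]
  · intro a b m l x y z
    simp only [lin_db N a b m l]
    exact torsionfree_jacobi (a • N ^ m + b • N ^ l)
      (mixed_torsion N htorsion a b m l) x y z
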